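/- For every integer n ≥ 7, λ(K₂ ∨ I_{n−2}) < λ(K⁺_{⌊n/2⌋,⌈n/2⌉}). -/

import Mathlib

open SimpleGraph

/-- The spectral radius (largest adjacency eigenvalue) of a finite simple graph. -/
noncomputable def specRad {V : Type*} [Fintype V] (G : SimpleGraph V) : ℝ :=
  letI : DecidableEq V := Classical.decEq V
  letI : DecidableRel G.Adj := Classical.decRel _
  sSup (spectrum ℝ (G.adjMatrix ℝ))

/-- `KplusAB a b` : the complete bipartite graph `K_{a,b}` with one extra edge
(between vertices `0` and `1`) inside the part of size `a`. -/
def KplusAB (a b : ℕ) : SimpleGraph (Fin a ⊕ Fin b) where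
  Adj x y :=
    match x, y with
    | .inl i, .inl j => (i.val = 0 ∧ j.val = 1) ∨ (i.val = 1 ∧ j.val = 0)
    | .inl _, .inr _ => True
    | .inr _, .inl _ => True
    | .inr _, .inr _ => False
  symm := by refine ⟨?_⟩; rintro (i | i) (j | j) h <;> simp_all <;> tauto
  loopless := by refine ⟨?_⟩; rintro (i | i) h <;> simp_all <;> omega

/-- `K₂ ∨ I_t` : join of an edge with an independent set of `t` vertices. -/
def K2JoinI (t : ℕ) : SimpleGraph (Fin 2 ⊕ Fin t) where
  Adj x y :=
    match x, y with
    | .inl i, .inl j => i ≠ j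
    | .inl _, .inr _ => True
    | .inr _, .inl _ => True
    | .inr _, .inr _ => False
  symm := by refine ⟨?_⟩; rintro (i | i) (j | j) h <;> simp_all <;> exact fun h' => h h'.symm
  loopless := by refine ⟨?_⟩; rintro (i | i) h <;> simp_all

/-!
For an eigenvector of `K₂ ∨ I_t` with eigenvalue `μ`, the coordinate sums `s` over the edge and
`S` over the independent set satisfy `μ s = s + 2S` and `μ S = t s`; unless `μ ∈ {0, ±1}` or
`μ² = μ + 2t` this forces the vector to vanish, so `λ(K₂ ∨ I_t)` is at most the positive root `r`
of `x² = x + 2t`. On `K⁺_{a,b}`, the vector equal to `x` on the ends of the extra edge, `y` on the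
rest of the part of size `a` and `1` on the part of size `b` is an eigenvector for every root
`μ > 1` of `μ³ - μ² - abμ + (a - 2)b`. For `a = ⌊n/2⌋`, `b = ⌈n/2⌉`, `t = n - 2` this cubic is
negative at `r`, so it has a root beyond `r`.
-/

open Matrix

theorem Matrix.mem_spectrum_iff_exists_mulVec_eq_smul {K n : Type*} [Field K] [Fintype n]
    [DecidableEq n] {A : Matrix n n K} {μ : K} : μ ∈ spectrum K A ↔ ∃ v ≠ 0, A *ᵥ v = μ • v := by
  rw [← spectrum_toLin', ← Module.End.hasEigenvalue_iff_mem_spectrum]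
  constructor
  · intro h
    obtain ⟨v, hv⟩ := h.exists_hasEigenvector
    exact ⟨v, hv.2, by simpa using Module.End.mem_eigenspace_iff.mp hv.1⟩
  · rintro ⟨v, hv, h⟩
    exact Module.End.hasEigenvalue_of_hasEigenvector
      ⟨Module.End.mem_eigenspace_iff.mpr (by simpa using h), hv⟩

section specRad
variable {V : Type*} [Fintype V] [DecidableEq V] {G : SimpleGraph V} [DecidableRel G.Adj]

lemma specRad_eq_sSup : specRad G = sSup (spectrum ℝ (G.adjMatrix ℝ)) := by
  unfold specRad
  congr!

lemma le_specRad_of_mulVec_eq_smul {μ : ℝ} {v : V → ℝ} (hv : v ≠ 0)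
    (h : G.adjMatrix ℝ *ᵥ v = μ • v) : μ ≤ specRad G := by
  rw [specRad_eq_sSup]
  exact le_csSup (Matrix.finite_spectrum _).bddAbove
    (mem_spectrum_iff_exists_mulVec_eq_smul.mpr ⟨v, hv, h⟩)

lemma specRad_le_of_forall_mulVec_eq_smul {r : ℝ} (hr : 0 ≤ r)
    (h : ∀ (μ : ℝ) (v : V → ℝ), v ≠ 0 → G.adjMatrix ℝ *ᵥ v = μ • v → μ ≤ r) :
    specRad G ≤ r := by
  rw [specRad_eq_sSup]
  refine Real.sSup_le (fun μ hμ => ?_) hr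
  obtain ⟨v, hv, hμv⟩ := mem_spectrum_iff_exists_mulVec_eq_smul.mp hμ
  exact h μ v hv hμv

end specRad

section K2JoinI
variable {t : ℕ}

@[simp] lemma K2JoinI_adj_inl_inl {i j : Fin 2} : (K2JoinI t).Adj (.inl i) (.inl j) ↔ i ≠ j :=
  Iff.rfl

@[simp] lemma K2JoinI_adj_inl_inr {i : Fin 2} {j : Fin t} : (K2JoinI t).Adj (.inl i) (.inr j) :=
  trivial

@[simp] lemma K2JoinI_adj_inr_inl {i : Fin 2} {j : Fin t} : (K2JoinI t).Adj (.inr j) (.inl i) :=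
  trivial

@[simp] lemma K2JoinI_not_adj_inr_inr {i j : Fin t} : ¬ (K2JoinI t).Adj (.inr i) (.inr j) :=
  id

lemma K2JoinI_eigenvalue_cases [DecidableRel (K2JoinI t).Adj] {μ : ℝ} {v : Fin 2 ⊕ Fin t → ℝ}
    (hv : v ≠ 0) (h : (K2JoinI t).adjMatrix ℝ *ᵥ v = μ • v) :
    μ = 0 ∨ μ ^ 2 = 1 ∨ μ ^ 2 = μ + 2 * t := by
  by_contra! ⟨hμ0, hμ1, hμt⟩
  apply hv
  have eq_at (x) := congrFun h x
  simp only [mulVec, dotProduct, adjMatrix_apply, Fintype.sum_sum_type, Fin.sum_univ_two,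
    Pi.smul_apply, smul_eq_mul] at eq_at
  have h0 : v (.inl 1) + ∑ j, v (.inr j) = μ * v (.inl 0) := by simpa using eq_at (.inl 0)
  have h1 : v (.inl 0) + ∑ j, v (.inr j) = μ * v (.inl 1) := by simpa using eq_at (.inl 1)
  have hinr (j : Fin t) : v (.inl 0) + v (.inl 1) = μ * v (.inr j) := by simpa using eq_at (.inr j)
  have hsum : μ * ∑ j, v (.inr j) = t * (v (.inl 0) + v (.inl 1)) := by
    simp [Finset.mul_sum, ← hinr, mul_add]
  have hs : v (.inl 0) + v (.inl 1) = 0 := by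
    have : (v (.inl 0) + v (.inl 1)) * (μ ^ 2 - μ - 2 * t) = 0 := by
      linear_combination (-μ) * (h0 + h1) + 2 * hsum
    simpa [sub_sub, sub_eq_zero, hμt] using this
  have hS : ∑ j, v (.inr j) = 0 := by simpa [hs, hμ0] using hsum
  have hv0 : v (.inl 0) = 0 := by
    have : v (.inl 0) * (μ ^ 2 - 1) = 0 := by linear_combination (-μ) * h0 - h1 + (μ + 1) * hS
    simpa [sub_eq_zero, hμ1] using this
  have hv1 : v (.inl 1) = 0 := by simpa [hS, hv0] using h0
  ext (i | j)
  · fin_cases i <;> assumption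
  · simpa [hs, hμ0] using hinr j

lemma specRad_K2JoinI_le {r : ℝ} (hr : 1 ≤ r) (hr2 : r ^ 2 = r + 2 * t) :
    specRad (K2JoinI t) ≤ r := by
  classical
  refine specRad_le_of_forall_mulVec_eq_smul (by linarith) fun μ v hv h => ?_
  rcases K2JoinI_eigenvalue_cases hv h with rfl | hμ | hμ
  · linarith
  · nlinarith
  · nlinarith

end K2JoinI

section KplusAB
variable {a b : ℕ}

@[simp] lemma KplusAB_adj_inl_inl {i j : Fin a} :
    (KplusAB a b).Adj (.inl i) (.inl j) ↔ (i.val = 0 ∧ j.val = 1) ∨ (i.val = 1 ∧ j.val = 0) :=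
  Iff.rfl

@[simp] lemma KplusAB_adj_inl_inr {i : Fin a} {j : Fin b} : (KplusAB a b).Adj (.inl i) (.inr j) :=
  trivial

@[simp] lemma KplusAB_adj_inr_inl {i : Fin a} {j : Fin b} : (KplusAB a b).Adj (.inr j) (.inl i) :=
  trivial

@[simp] lemma KplusAB_not_adj_inr_inr {i j : Fin b} : ¬ (KplusAB a b).Adj (.inr i) (.inr j) :=
  id

lemma KplusAB_adjMatrix_mulVec [DecidableRel (KplusAB a b).Adj] (ha : 2 ≤ a) {μ x y : ℝ}
    (hx : x + b = μ * x) (hy : b = μ * y) (hxy : 2 * x + (a - 2) * y = μ) :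
    (KplusAB a b).adjMatrix ℝ *ᵥ Sum.elim (fun i : Fin a => if (i : ℕ) < 2 then x else y) 1 =
      μ • Sum.elim (fun i : Fin a => if (i : ℕ) < 2 then x else y) 1 := by
  obtain ⟨a, rfl⟩ := Nat.exists_eq_add_of_le' ha
  ext (⟨_ | _ | i, hi⟩ | j) <;>
    simp [mulVec, dotProduct, adjMatrix_apply, Fintype.sum_sum_type, Fin.sum_univ_succ]
  · exact hx
  · exact hx
  · exact hy
  · push_cast at hxy
    linear_combination hxy

lemma le_specRad_KplusAB (ha : 2 ≤ a) (hb : 0 < b) {μ : ℝ} (hμ : 1 < μ)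
    (hroot : μ ^ 3 - μ ^ 2 - a * b * μ + (a - 2) * b = 0) : μ ≤ specRad (KplusAB a b) := by
  classical
  have hμ0 : μ ≠ 0 := by positivity
  have hμ1 : μ - 1 ≠ 0 := by linarith
  refine le_specRad_of_mulVec_eq_smul ?_
    (KplusAB_adjMatrix_mulVec ha (x := b / (μ - 1)) (y := b / μ) ?_ ?_ ?_)
  · exact Function.ne_iff.mpr ⟨.inr ⟨0, hb⟩, by simp⟩
  · field_simp
    ring
  · field_simp
  · field_simp
    linear_combination -hroot

end KplusAB

lemma exists_cubic_root_gt {p q r : ℝ} (hr : 0 < r) (hp : 0 ≤ p) (hq : 0 ≤ q)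
    (h : r ^ 3 - r ^ 2 - p * r + q < 0) : ∃ μ, r < μ ∧ μ ^ 3 - μ ^ 2 - p * μ + q = 0 := by
  have hX : 0 < (r + p + 1) ^ 3 - (r + p + 1) ^ 2 - p * (r + p + 1) + q := by
    have : 0 < (r + p + 1) * ((r + p + 1) * (r + p) - p) := by
      apply mul_pos <;> nlinarith
    linear_combination this + hq
  obtain ⟨μ, hμ, hμ_root⟩ := intermediate_value_Ioo (by linarith : r ≤ r + p + 1)
    (f := fun x => x ^ 3 - x ^ 2 - p * x + q) (by fun_prop) ⟨h, hX⟩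
  exact ⟨μ, hμ.1, hμ_root⟩

lemma Nat.half_mul_half_bounds {n : ℕ} (hn : 6 ≤ n) :
    2 * (n - 2) < n / 2 * ((n + 1) / 2) ∧ 3 * (n - 2) ≤ n / 2 * ((n + 1) / 2) + (n + 1) / 2 := by
  obtain ⟨k, rfl | rfl⟩ := Nat.even_or_odd' n
  · rw [show 2 * k / 2 = k by omega, show (2 * k + 1) / 2 = k by omega]
    constructor <;> zify [(by omega : 2 ≤ 2 * k)] <;> nlinarith
  · rw [show (2 * k + 1) / 2 = k by omega, show (2 * k + 1 + 1) / 2 = k + 1 by omega]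
    constructor <;> zify [(by omega : 2 ≤ 2 * k + 1)] <;> nlinarith

theorem K2JoinI_lt_Kplus (n : ℕ) (hn : 7 ≤ n) :
    specRad (K2JoinI (n - 2)) < specRad (KplusAB (n / 2) ((n + 1) / 2)) := by
  obtain ⟨h2t, h3t⟩ := Nat.half_mul_half_bounds (n := n) (by omega)
  set t := n - 2
  set a := n / 2
  set b := (n + 1) / 2
  have ht : (5 : ℝ) ≤ t := by exact_mod_cast (by omega : 5 ≤ t)
  have ha : (2 : ℝ) ≤ a := by exact_mod_cast (by omega : 2 ≤ a)
  obtain ⟨r, hr, hr3⟩ : ∃ r : ℝ, r ^ 2 = r + 2 * t ∧ 3 < r := by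
    have hsq := Real.sq_sqrt (by positivity : (0 : ℝ) ≤ 1 + 8 * t)
    have h5 : 5 < √(1 + 8 * t) := (Real.lt_sqrt (by norm_num)).mpr (by linarith)
    exact ⟨(1 + √(1 + 8 * t)) / 2, by linear_combination hsq / 4, by linarith⟩
  -- `r³ = r² + 2tr` turns the cubic at `r` into `(a - 2)b - (ab - 2t)r`, and `r > 3`
  have hneg : r ^ 3 - r ^ 2 - a * b * r + (a - 2) * b < 0 := by
    have : (2 * t + 1 : ℝ) ≤ a * b := by exact_mod_cast h2t
    have : (3 * t : ℝ) ≤ a * b + b := by exact_mod_cast h3t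
    nlinarith
  obtain ⟨μ, hrμ, hroot⟩ := exists_cubic_root_gt (by linarith) (by positivity) (by nlinarith) hneg
  calc specRad (K2JoinI t) ≤ r := specRad_K2JoinI_le (by linarith) hr
    _ < μ := hrμ
    _ ≤ specRad (KplusAB a b) := le_specRad_KplusAB (by omega) (by omega) (by linarith) hroot
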